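/- There is a constant c > 0 and N : ℕ such that for every n ≥ N there exists a matrix A : Matrix (Fin n) (Fin n) (ZMod 2) with the following property: for every r : ℕ and all matrices B : Matrix (Fin r) (Fin n) (ZMod 2), C : Matrix (Fin n) (Fin r) (ZMod 2), D : Matrix (Fin n) (Fin n) (ZMod 2) with A = C * B + D, one has |B| + |C| + |D| ≥ c * n^2 / Real.logb 2 n, where |M| denotes the number of nonzero entries of M. (Equivalently: some linear n-operator requires Ω(n²/log n) wires in any depth-2 circuit all of whose gates are parities, where D records the direct input–output wires.) -/

import Mathlib

open Matrix

/-- `g` depends only on the coordinates in `T`. -/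
def DependsOnlyOn {k : ℕ} (g : (Fin k → ZMod 2) → ZMod 2) (T : Finset (Fin k)) : Prop :=
  ∀ u v : Fin k → ZMod 2, (∀ i ∈ T, u i = v i) → g u = g v

/-- The number of nonzero entries of a matrix. -/
def nnz {α β : Type*} [Fintype α] [Fintype β] (M : Matrix α β (ZMod 2)) : ℕ :=
  (Finset.univ.filter (fun p : α × β => M p.1 p.2 ≠ 0)).card

/-!
A counting argument. A circuit with at most `k` wires has at most `k` middle gates that matter, so
it may be assumed to have exactly `k` of them; it is then determined by its set of wires, a subset
of size at most `k` of a ground set with `2kn + n²` elements. Hence at most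
`(2kn + n² + 1)^k ≤ n^(4k)` operators are computed with at most `k` wires, and for
`k = ⌊n² / (5 log₂ n)⌋` this is less than `2^(n²)`, the number of `n × n` matrices.
-/

open Finset

section Support

variable {α β : Type*} [Fintype α] [Fintype β]

def support (M : Matrix α β (ZMod 2)) : Finset (α × β) := {p | M p.1 p.2 ≠ 0}

lemma card_support (M : Matrix α β (ZMod 2)) : #(support M) = nnz M := rfl

lemma support_injective : Function.Injective (support : Matrix α β (ZMod 2) → _) := by
  intro M N h
  ext i j
  have hij : M i j ≠ 0 ↔ N i j ≠ 0 := by simpa [support] using congr((i, j) ∈ $h)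
  have eq_of_ne_zero_iff : ∀ a b : ZMod 2, (a ≠ 0 ↔ b ≠ 0) → a = b := by decide
  exact eq_of_ne_zero_iff _ _ hij

lemma nnz_eq_sum (M : Matrix α β (ZMod 2)) :
    nnz M = ∑ i, ∑ j, if M i j ≠ 0 then 1 else 0 := by
  simp only [nnz, card_filter, Fintype.sum_prod_type]

@[simp]
lemma nnz_zero : nnz (0 : Matrix α β (ZMod 2)) = 0 := by
  simp [nnz]

lemma nnz_fromRows {α' : Type*} [Fintype α'] (M₁ : Matrix α β (ZMod 2))
    (M₂ : Matrix α' β (ZMod 2)) :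
    nnz (fromRows M₁ M₂) = nnz M₁ + nnz M₂ := by
  simp only [nnz_eq_sum, Fintype.sum_sum_type, fromRows_apply_inl, fromRows_apply_inr]
  rfl

lemma nnz_fromCols {β' : Type*} [Fintype β'] (M₁ : Matrix α β (ZMod 2))
    (M₂ : Matrix α β' (ZMod 2)) :
    nnz (fromCols M₁ M₂) = nnz M₁ + nnz M₂ := by
  simp only [nnz_eq_sum, Fintype.sum_sum_type, fromCols_apply_inl, fromCols_apply_inr,
    sum_add_distrib]
  rfl

lemma nnz_submatrix_le {α' β' : Type*} [Fintype α'] [Fintype β'] (M : Matrix α β (ZMod 2))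
    {f : α' → α} {g : β' → β} (hf : f.Injective) (hg : g.Injective) :
    nnz (M.submatrix f g) ≤ nnz M :=
  card_le_card_of_injOn (Prod.map f g) (fun p hp => by simpa using mem_filter.mp (mem_coe.mp hp))
    (hf.prodMap hg).injOn

lemma card_matrix_zmod_two [DecidableEq α] [DecidableEq β] :
    Fintype.card (Matrix α β (ZMod 2)) = 2 ^ (Fintype.card α * Fintype.card β) := by
  rw [Fintype.card_congr (α := Matrix α β (ZMod 2)) (β := α → β → ZMod 2) (Equiv.refl _)]
  simp [pow_mul']

end Support

section Finsets

lemma card_finsets_card_le_le_pow (γ : Type*) [Fintype γ] [DecidableEq γ] (k : ℕ) :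
    #{S : Finset γ | #S ≤ k} ≤ (Fintype.card γ + 1) ^ k := by
  induction k with
  | zero => simp [card_le_one]
  | succ k ih =>
    have hsplit : ({S : Finset γ | #S ≤ k + 1} : Finset _) =
        ({S : Finset γ | #S ≤ k} : Finset _) ∪ powersetCard (k + 1) univ := by
      ext S
      simp [mem_powersetCard, Nat.le_succ_iff]
    calc #{S : Finset γ | #S ≤ k + 1}
        ≤ (Fintype.card γ + 1) ^ k + (Fintype.card γ).choose (k + 1) := by
          rw [hsplit]
          exact (card_union_le _ _).trans (by simp [ih])
      _ ≤ (Fintype.card γ + 1) ^ k + Fintype.card γ * (Fintype.card γ + 1) ^ k := by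
          gcongr
          exact (Nat.choose_le_pow _ _).trans
            (by rw [pow_succ']; gcongr; omega)
      _ = (Fintype.card γ + 1) ^ (k + 1) := by ring

end Finsets

section Compress

lemma submatrix_mul_submatrix_of_row_eq_zero {R ι κ μ : Type*} [Fintype κ]
    [NonUnitalNonAssocSemiring R]
    (C : Matrix μ κ R) (B : Matrix κ ι R) (s : Finset κ) (hB : ∀ k ∉ s, B k = 0) :
    -- without the ascriptions, elaboration picks the `CStarMatrix` multiplication instance
    (C.submatrix id (↑) : Matrix μ s R) * (B.submatrix (↑) id : Matrix s ι R) = C * B := by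
  ext i j
  rw [mul_apply, mul_apply]
  simp only [submatrix_apply, id]
  rw [sum_coe_sort s (fun k => C i k * B k j)]
  refine sum_subset (subset_univ s) fun k _ hk => ?_
  simp [hB k hk]

variable {ι κ : Type*} [Fintype ι] [Fintype κ]

lemma exists_mul_eq_mul_of_card_le {τ : Type*} [Fintype τ] {w : ℕ} (hτ : Fintype.card τ ≤ w)
    (C : Matrix ι τ (ZMod 2)) (B : Matrix τ ι (ZMod 2)) :
    ∃ (C' : Matrix ι (Fin w) (ZMod 2)) (B' : Matrix (Fin w) ι (ZMod 2)),
      C' * B' = C * B ∧ nnz C' ≤ nnz C ∧ nnz B' ≤ nnz B := by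
  let e : τ ⊕ Fin (w - Fintype.card τ) ≃ Fin w :=
    (Fintype.equivFin τ).sumCongr (Equiv.refl _) |>.trans finSumFinEquiv |>.trans
      (finCongr (by omega))
  refine ⟨(fromCols C 0).submatrix id e.symm, (fromRows B 0).submatrix e.symm id, ?_, ?_, ?_⟩
  · rw [submatrix_mul_equiv, fromCols_mul_fromRows]
    simp
  · simpa [nnz_fromCols] using
      nnz_submatrix_le (fromCols C 0) Function.injective_id e.symm.injective
  · simpa [nnz_fromRows] using
      nnz_submatrix_le (fromRows B 0) e.symm.injective Function.injective_id

lemma exists_mul_eq_mul_of_nnz_le [DecidableEq κ] {w : ℕ} (C : Matrix ι κ (ZMod 2))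
    (B : Matrix κ ι (ZMod 2)) (hB : nnz B ≤ w) :
    ∃ (C' : Matrix ι (Fin w) (ZMod 2)) (B' : Matrix (Fin w) ι (ZMod 2)),
      C' * B' = C * B ∧ nnz C' ≤ nnz C ∧ nnz B' ≤ nnz B := by
  let s := (support B).image Prod.fst
  have hs : ∀ k ∉ s, B k = 0 := fun k hk => by
    ext j
    by_contra hkj
    exact hk (mem_image.mpr ⟨(k, j), by simpa [support] using hkj, rfl⟩)
  have hcard : Fintype.card s ≤ w := by
    simpa using (card_image_le.trans_eq (card_support B)).trans hB
  obtain ⟨C', B', hmul, hC', hB'⟩ :=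
    exists_mul_eq_mul_of_card_le hcard (C.submatrix id ((↑) : s → κ)) (B.submatrix (↑) id)
  refine ⟨C', B', hmul.trans (submatrix_mul_submatrix_of_row_eq_zero C B s hs),
    hC'.trans ?_, hB'.trans ?_⟩
  · exact nnz_submatrix_le C Function.injective_id Subtype.val_injective
  · exact nnz_submatrix_le B Subtype.val_injective Function.injective_id

end Compress

section Counting

variable {ι κ : Type*} [Fintype ι] [Fintype κ] [DecidableEq ι] [DecidableEq κ]

lemma card_sparse_circuits_le (k : ℕ) :
    #{x : Matrix κ ι (ZMod 2) × Matrix ι κ (ZMod 2) × Matrix ι ι (ZMod 2) |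
        nnz x.1 + nnz x.2.1 + nnz x.2.2 ≤ k}
      ≤ (2 * Fintype.card κ * Fintype.card ι + Fintype.card ι ^ 2 + 1) ^ k := by
  let wires (x : Matrix κ ι (ZMod 2) × Matrix ι κ (ZMod 2) × Matrix ι ι (ZMod 2)) :
      Finset ((κ × ι) ⊕ (ι × κ) ⊕ (ι × ι)) :=
    (support x.1).disjSum ((support x.2.1).disjSum (support x.2.2))
  have hinj : wires.Injective := fun x y hxy => by
    simp only [wires, disjSum_inj] at hxy
    exact Prod.ext (support_injective hxy.1)
      (Prod.ext (support_injective hxy.2.1) (support_injective hxy.2.2))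
  calc _ ≤ #{S : Finset ((κ × ι) ⊕ (ι × κ) ⊕ (ι × ι)) | #S ≤ k} := by
        refine card_le_card_of_injOn wires (fun x hx => ?_) hinj.injOn
        simpa [wires, card_support, add_assoc] using hx
    _ ≤ _ := (card_finsets_card_le_le_pow _ k).trans_eq (by simp; ring)

lemma exists_forall_nnz_gt {k : ℕ}
    (hk : (2 * Fintype.card κ * Fintype.card ι + Fintype.card ι ^ 2 + 1) ^ k
      < 2 ^ (Fintype.card ι ^ 2)) :
    ∃ A : Matrix ι ι (ZMod 2), ∀ (B : Matrix κ ι (ZMod 2)) (C : Matrix ι κ (ZMod 2))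
      (D : Matrix ι ι (ZMod 2)), A = C * B + D → k < nnz B + nnz C + nnz D := by
  let sparse : Finset (Matrix κ ι (ZMod 2) × Matrix ι κ (ZMod 2) × Matrix ι ι (ZMod 2)) :=
    {x | nnz x.1 + nnz x.2.1 + nnz x.2.2 ≤ k}
  have hcard : #(sparse.image fun x => x.2.1 * x.1 + x.2.2)
      < #(univ : Finset (Matrix ι ι (ZMod 2))) := by
    rw [card_univ, card_matrix_zmod_two, ← sq]
    exact card_image_le.trans_lt ((card_sparse_circuits_le k).trans_lt hk)
  obtain ⟨A, -, hA⟩ := exists_mem_notMem_of_card_lt_card hcard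
  refine ⟨A, fun B C D hA' => ?_⟩
  by_contra! hle
  exact hA (mem_image.mpr ⟨(B, C, D), by simpa [sparse] using hle, hA'.symm⟩)

end Counting

lemma exists_forall_depth_two_nnz_gt {ι : Type*} [Fintype ι] [DecidableEq ι] {k : ℕ}
    (hk : (2 * k * Fintype.card ι + Fintype.card ι ^ 2 + 1) ^ k < 2 ^ (Fintype.card ι ^ 2)) :
    ∃ A : Matrix ι ι (ZMod 2), ∀ (r : ℕ) (B : Matrix (Fin r) ι (ZMod 2))
      (C : Matrix ι (Fin r) (ZMod 2)) (D : Matrix ι ι (ZMod 2)),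
      A = C * B + D → k < nnz B + nnz C + nnz D := by
  obtain ⟨A, hA⟩ := exists_forall_nnz_gt (κ := Fin k) (ι := ι) (by simpa using hk)
  refine ⟨A, fun r B C D hABCD => ?_⟩
  by_contra! hle
  obtain ⟨C', B', hmul, hC', hB'⟩ := exists_mul_eq_mul_of_nnz_le (w := k) C B (by omega)
  have := hA B' C' D (by rw [hmul, hABCD])
  omega

lemma pow_lt_two_pow_of_mul_logb_lt {n e m : ℕ} (hn : 0 < n) (h : e * Real.logb 2 n < m) :
    n ^ e < 2 ^ m := by
  have hlog2 : 0 < Real.log 2 := Real.log_pos one_lt_two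
  rw [Real.logb, mul_div_assoc', div_lt_iff₀ hlog2] at h
  have : (n : ℝ) ^ e < 2 ^ m := by
    rw [← Real.log_lt_log_iff (by positivity) (by positivity), Real.log_pow, Real.log_pow]
    exact h
  exact_mod_cast this

/-- Some linear `n`-operators require `Ω(n²/log n)` wires in any depth-2 circuit all of
whose gates are parities: if `A = C * B + D` then `|B| + |C| + |D| ≥ c·n²/log₂ n`. -/
theorem lower_bound_fully_linear_depth_two :
    ∃ c : ℝ, c > 0 ∧ ∃ N : ℕ, ∀ n ≥ N,
      ∃ A : Matrix (Fin n) (Fin n) (ZMod 2),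
        ∀ (r : ℕ) (B : Matrix (Fin r) (Fin n) (ZMod 2))
          (C : Matrix (Fin n) (Fin r) (ZMod 2)) (D : Matrix (Fin n) (Fin n) (ZMod 2)),
          A = C * B + D →
          c * (n : ℝ) ^ 2 / Real.logb 2 n ≤ (nnz B + nnz C + nnz D : ℕ) := by
  refine ⟨1 / 5, by norm_num, 3, fun n hn => ?_⟩
  have hL : 1 ≤ Real.logb 2 n := by
    rw [Real.le_logb_iff_rpow_le one_lt_two (by positivity), Real.rpow_one]
    exact_mod_cast (by omega : 2 ≤ n)
  set x := 1 / 5 * (n : ℝ) ^ 2 / Real.logb 2 n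
  set k := ⌊x⌋₊
  have hkx : (k : ℝ) * Real.logb 2 n ≤ 1 / 5 * n ^ 2 :=
    (le_div_iff₀ (by positivity)).mp (Nat.floor_le (by positivity))
  have hkn : k ≤ n ^ 2 := by
    have : (k : ℝ) ≤ n ^ 2 := by nlinarith
    exact_mod_cast this
  have hcount : (2 * k * n + n ^ 2 + 1) ^ k < 2 ^ (n ^ 2) :=
    calc (2 * k * n + n ^ 2 + 1) ^ k ≤ (n ^ 4) ^ k := by
          gcongr
          have : 2 * k * n ≤ 2 * n ^ 3 := by nlinarith
          nlinarith [Nat.mul_le_mul_right (n ^ 3) hn, Nat.mul_le_mul_right (n ^ 2) hn]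
      _ = n ^ (4 * k) := by rw [← pow_mul]
      _ < 2 ^ (n ^ 2) := by
          refine pow_lt_two_pow_of_mul_logb_lt (by omega) ?_
          push_cast
          nlinarith [sq_pos_of_pos (by positivity : (0 : ℝ) < n)]
  obtain ⟨A, hA⟩ := exists_forall_depth_two_nnz_gt (ι := Fin n) (by simpa using hcount)
  refine ⟨A, fun r B C D hABCD => ?_⟩
  have hwires : k + 1 ≤ nnz B + nnz C + nnz D := hA r B C D hABCD
  calc x ≤ k + 1 := (Nat.lt_floor_add_one x).le
    _ ≤ _ := by exact_mod_cast hwires
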